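/- Let B be a symmetric positive definite n×n real matrix and s, y vectors with yᵀ s > 0 and s ≠ 0. Then the BFGS update B⁺ = B - (B s sᵀ B)/(sᵀ B s) + (y yᵀ)/(yᵀ s) satisfies det(B⁺) = det(B) · (yᵀ s)/(sᵀ B s). -/

import Mathlib

open Matrix

/-!
Factoring out `B`, the BFGS update is `B (1 - s (Bs)ᵀ / sᵀBs + B⁻¹y yᵀ / yᵀs)`, a rank-two
perturbation of the identity. By the Weinstein–Aronszajn identity its determinant is the
determinant of a `2 × 2` matrix of inner products, in which `(Bs)ᵀs / sᵀBs = 1` makes the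
diagonal product vanish, leaving `(Bs)ᵀB⁻¹y · yᵀs / (sᵀBs · yᵀs) = yᵀs / sᵀBs`.
-/

/-- BFGS update formula. -/
noncomputable def bfgsUpdate {n : ℕ} (B : Matrix (Fin n) (Fin n) ℝ)
    (s y : Fin n → ℝ) : Matrix (Fin n) (Fin n) ℝ :=
  B - (s ⬝ᵥ B.mulVec s)⁻¹ • (B * vecMulVec s s * B) + (y ⬝ᵥ s)⁻¹ • vecMulVec y y

namespace Matrix

variable {R n : Type*} [CommRing R] [Fintype n] [DecidableEq n]

theorem det_one_add_vecMulVec_add_vecMulVec (u₁ u₂ v₁ v₂ : n → R) :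
    det (1 + vecMulVec u₁ v₁ + vecMulVec u₂ v₂) =
      (1 + v₁ ⬝ᵥ u₁) * (1 + v₂ ⬝ᵥ u₂) - (v₁ ⬝ᵥ u₂) * (v₂ ⬝ᵥ u₁) := by
  have hUV : vecMulVec u₁ v₁ + vecMulVec u₂ v₂ = (of ![u₁, u₂])ᵀ * of ![v₁, v₂] := by
    ext i j
    simp [mul_apply, vecMulVec_apply]
  have hVU : of ![v₁, v₂] * (of ![u₁, u₂])ᵀ = !![v₁ ⬝ᵥ u₁, v₁ ⬝ᵥ u₂; v₂ ⬝ᵥ u₁, v₂ ⬝ᵥ u₂] := by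
    ext k l
    fin_cases k <;> fin_cases l <;> rfl
  rw [add_assoc, hUV, det_one_add_mul_comm, hVU]
  simp [det_fin_two]

end Matrix

theorem bfgsUpdate_eq_mul {n : ℕ} {B : Matrix (Fin n) (Fin n) ℝ} (hB : B.IsSymm)
    (hBdet : IsUnit B.det) (s y : Fin n → ℝ) :
    bfgsUpdate B s y = B * (1 + vecMulVec s (-((s ⬝ᵥ B *ᵥ s)⁻¹ • (B *ᵥ s)))
      + vecMulVec (B⁻¹ *ᵥ y) ((y ⬝ᵥ s)⁻¹ • y)) := by
  simp only [bfgsUpdate, Matrix.mul_add, Matrix.mul_one, mul_vecMulVec, vecMulVec_mul,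
    mulVec_mulVec, mul_nonsing_inv B hBdet, one_mulVec]
  rw [← mulVec_transpose, hB.eq]
  simp only [vecMulVec_smul, vecMulVec_neg, sub_eq_add_neg]

theorem det_bfgsUpdate {n : ℕ} {B : Matrix (Fin n) (Fin n) ℝ} (hB : B.IsSymm)
    (hBdet : IsUnit B.det) {s : Fin n → ℝ} (hsBs : s ⬝ᵥ B *ᵥ s ≠ 0) (y : Fin n → ℝ) :
    (bfgsUpdate B s y).det = B.det * (y ⬝ᵥ s) / (s ⬝ᵥ B *ᵥ s) := by
  have hBss : (B *ᵥ s) ⬝ᵥ s = s ⬝ᵥ B *ᵥ s := dotProduct_comm _ _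
  have hBsy : (B *ᵥ s) ⬝ᵥ (B⁻¹ *ᵥ y) = y ⬝ᵥ s := by
    rw [← vecMul_transpose, hB.eq, ← dotProduct_mulVec, mulVec_mulVec, mul_nonsing_inv B hBdet,
      one_mulVec, dotProduct_comm]
  rw [bfgsUpdate_eq_mul hB hBdet, det_mul, det_one_add_vecMulVec_add_vecMulVec]
  simp only [neg_dotProduct, smul_dotProduct, smul_eq_mul, hBss, hBsy, inv_mul_cancel₀ hsBs]
  rw [add_neg_cancel, zero_mul, zero_sub, neg_mul, neg_neg, mul_assoc _ (y ⬝ᵥ s),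
    ← mul_assoc (y ⬝ᵥ s), mul_inv_mul_cancel, mul_div_assoc, div_eq_inv_mul]

theorem bfgs_det_formula_general {n : ℕ} (B : Matrix (Fin n) (Fin n) ℝ)
    (hB : B.PosDef) (s y : Fin n → ℝ) (hs : s ≠ 0) :
    (bfgsUpdate B s y).det = B.det * (y ⬝ᵥ s) / (s ⬝ᵥ B.mulVec s) :=
  det_bfgsUpdate (isHermitian_iff_isSymm.mp hB.isHermitian) hB.det_pos.ne'.isUnit
    (hB.dotProduct_mulVec_pos hs).ne' y

theorem bfgs_det_formula {n : ℕ} (B : Matrix (Fin n) (Fin n) ℝ)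
    (hB : B.PosDef) (s y : Fin n → ℝ) (hs : s ≠ 0)
    (hys : 0 < y ⬝ᵥ s) :
    (bfgsUpdate B s y).det = B.det * (y ⬝ᵥ s) / (s ⬝ᵥ B.mulVec s) :=
  bfgs_det_formula_general B hB s y hs
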